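/- For all x, y > 0, the function 1/(x·y) satisfies the pointwise bound 1/(x·y) ≤ 4·∑_{m,n ∈ ℤ} ⟨δ_0⟩_{I_m × I_n} · 𝟙_{I_m × I_n}(x,y), where I_m = [0, 2^m) and ⟨δ_0⟩_{R} = δ_0(R)/|R|. Moreover, the collection {I_m × I_n : m, n ∈ ℤ} is 1/4-sparse. -/

import Mathlib

/-!
Each `x > 0` lies in some `I_m` with `2^m ≤ 2x`, so for `x, y > 0` the single rectangle
`I_m × I_n ∋ (x, y)` already contributes `1/|I_m × I_n| ≥ 1/(4xy)` to the sum.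
For sparseness take `E(I_m × I_n) = (I_m ∖ I_{m-1}) × (I_n ∖ I_{n-1})`: the shells
`I_m ∖ I_{m-1}` carry half the length of `I_m` and are pairwise disjoint, so these corners
carry a quarter of the area and are pairwise disjoint.
-/

open MeasureTheory
open scoped ENNReal

/-- The dyadic interval `I_m = [0, 2^m)`. -/
noncomputable def Iint (m : ℤ) : Set ℝ := Set.Ico 0 ((2 : ℝ) ^ m)

/-- An `η`-sparse collection of sets: each `R` has a major subset `E R` of measure
at least `η·|R|`, and these major subsets are pairwise disjoint. -/
def IsSparseColl (η : ℝ) (S : Set (Set (ℝ × ℝ))) : Prop :=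
  ∃ E : Set (ℝ × ℝ) → Set (ℝ × ℝ),
    (∀ R ∈ S, E R ⊆ R ∧ ENNReal.ofReal η * volume R ≤ volume (E R)) ∧
    S.PairwiseDisjoint E

/-- Intrinsic form of the corner `(I_m ∖ I_{m-1}) × (I_n ∖ I_{n-1})` of `I_m × I_n`: the major
subset has to be a function of the rectangle alone, not of its indices. -/
def upperCorner (R : Set (ℝ × ℝ)) : Set (ℝ × ℝ) :=
  {p ∈ R | (2 * p.1, p.2) ∉ R ∧ (p.1, 2 * p.2) ∉ R}

lemma two_zpow_eq_two_mul_two_zpow_sub_one (m : ℤ) : (2 : ℝ) ^ m = 2 * 2 ^ (m - 1) := by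
  rw [← zpow_one_add₀ two_ne_zero]; ring_nf

lemma Iint_mono : Monotone Iint := fun _ _ h =>
  Set.Ico_subset_Ico_right (zpow_le_zpow_right₀ one_le_two h)

lemma two_mul_mem_Iint_iff {x : ℝ} (m : ℤ) : 2 * x ∈ Iint m ↔ x ∈ Iint (m - 1) := by
  simp only [Iint, Set.mem_Ico, two_zpow_eq_two_mul_two_zpow_sub_one m]
  constructor <;> rintro ⟨_, _⟩ <;> constructor <;> linarith

lemma volume_Iint (m : ℤ) : volume (Iint m) = ENNReal.ofReal (2 ^ m) := by
  simp [Iint]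

lemma volume_Iint_prod (m n : ℤ) :
    volume (Iint m ×ˢ Iint n) = ENNReal.ofReal (2 ^ m * 2 ^ n) := by
  rw [Measure.volume_eq_prod, Measure.prod_prod, volume_Iint, volume_Iint,
    ENNReal.ofReal_mul (zpow_pos two_pos m).le]

lemma volume_Iint_eq_two_mul_volume_diff (m : ℤ) :
    volume (Iint m) = 2 * volume (Iint m \ Iint (m - 1)) := by
  rw [measure_sdiff (Iint_mono (by omega)) measurableSet_Ico.nullMeasurableSet
      (by simp [volume_Iint]),
    volume_Iint, volume_Iint, ← ENNReal.ofReal_sub _ (zpow_pos two_pos _).le,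
    ← ENNReal.ofReal_ofNat 2, ← ENNReal.ofReal_mul zero_le_two,
    two_zpow_eq_two_mul_two_zpow_sub_one m]
  ring_nf

lemma pairwise_disjoint_Iint_diff :
    Pairwise (Function.onFun Disjoint fun m => Iint m \ Iint (m - 1)) := by
  intro m m' hne
  wlog hlt : m < m' generalizing m m'
  · exact (this hne.symm (by omega)).symm
  exact Set.disjoint_sdiff_right.mono_left
    (Set.sdiff_subset.trans (Iint_mono (by omega)))

lemma upperCorner_Iint_prod (m n : ℤ) :
    upperCorner (Iint m ×ˢ Iint n) = (Iint m \ Iint (m - 1)) ×ˢ (Iint n \ Iint (n - 1)) := by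
  ext ⟨x, y⟩
  simp only [upperCorner, Set.mem_ofPred_eq, Set.mem_prod, Set.mem_sdiff,
    two_mul_mem_Iint_iff]
  tauto

lemma isSparseColl_Iint_prod : IsSparseColl (1 / 4) {R | ∃ m n : ℤ, R = Iint m ×ˢ Iint n} := by
  refine ⟨upperCorner, ?_, ?_⟩
  · rintro R ⟨m, n, rfl⟩
    refine ⟨fun p hp => hp.1, ?_⟩
    rw [upperCorner_Iint_prod, Measure.volume_eq_prod, Measure.prod_prod, Measure.prod_prod,
      volume_Iint_eq_two_mul_volume_diff m, volume_Iint_eq_two_mul_volume_diff n,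
      mul_mul_mul_comm, ← mul_assoc, ENNReal.ofReal_div_of_pos four_pos]
    norm_num [ENNReal.inv_mul_cancel]
  · rintro _ ⟨m, n, rfl⟩ _ ⟨m', n', rfl⟩ hne
    simp only [Function.onFun, upperCorner_Iint_prod, Set.disjoint_prod]
    by_cases hm : m = m'
    · subst hm
      exact Or.inr (pairwise_disjoint_Iint_diff fun hn => hne (by rw [hn]))
    · exact Or.inl (pairwise_disjoint_Iint_diff hm)

lemma exists_mem_Iint_two_zpow_le {x : ℝ} (hx : 0 < x) : ∃ m : ℤ, x ∈ Iint m ∧ 2 ^ m ≤ 2 * x := by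
  obtain ⟨m, hm, hm'⟩ := exists_mem_Ico_zpow hx one_lt_two
  refine ⟨m + 1, ⟨hx.le, hm'⟩, ?_⟩
  rw [zpow_add_one₀ two_ne_zero]
  linarith

lemma dirac_zero_div_volume_Iint_prod (m n : ℤ) :
    Measure.dirac ((0 : ℝ), (0 : ℝ)) (Iint m ×ˢ Iint n) / volume (Iint m ×ˢ Iint n) =
      (ENNReal.ofReal (2 ^ m * 2 ^ n))⁻¹ := by
  have h0 : ((0 : ℝ), (0 : ℝ)) ∈ Iint m ×ˢ Iint n :=
    ⟨⟨le_rfl, zpow_pos two_pos m⟩, ⟨le_rfl, zpow_pos two_pos n⟩⟩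
  rw [Measure.dirac_apply_of_mem h0, volume_Iint_prod, one_div]

lemma ofReal_one_div_mul_le_four_mul_tsum {x y : ℝ} (hx : 0 < x) (hy : 0 < y) :
    ENNReal.ofReal (1 / (x * y)) ≤
      4 * ∑' m : ℤ, ∑' n : ℤ,
        (Measure.dirac ((0 : ℝ), (0 : ℝ)) (Iint m ×ˢ Iint n) / volume (Iint m ×ˢ Iint n)) *
          (Iint m ×ˢ Iint n).indicator (fun _ => (1 : ℝ≥0∞)) (x, y) := by
  obtain ⟨m, hxm, hm⟩ := exists_mem_Iint_two_zpow_le hx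
  obtain ⟨n, hyn, hn⟩ := exists_mem_Iint_two_zpow_le hy
  have hmn : (0 : ℝ) < 2 ^ m * 2 ^ n := mul_pos (zpow_pos two_pos m) (zpow_pos two_pos n)
  have hxy : 1 / (x * y) ≤ 4 / (2 ^ m * 2 ^ n) := by
    rw [div_le_div_iff₀ (mul_pos hx hy) hmn]
    nlinarith [zpow_pos (two_pos : (0 : ℝ) < 2) m, zpow_pos (two_pos : (0 : ℝ) < 2) n]
  calc ENNReal.ofReal (1 / (x * y))
      ≤ ENNReal.ofReal (4 / (2 ^ m * 2 ^ n)) := ENNReal.ofReal_le_ofReal hxy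
    _ = 4 * ((Measure.dirac ((0 : ℝ), (0 : ℝ)) (Iint m ×ˢ Iint n) / volume (Iint m ×ˢ Iint n)) *
          (Iint m ×ˢ Iint n).indicator (fun _ => (1 : ℝ≥0∞)) (x, y)) := by
      rw [dirac_zero_div_volume_Iint_prod, Set.indicator_of_mem (Set.mk_mem_prod hxm hyn),
        mul_one, ENNReal.ofReal_div_of_pos hmn, ENNReal.ofReal_ofNat, div_eq_mul_inv]
    _ ≤ _ := by
      gcongr
      exact (ENNReal.le_tsum n).trans (ENNReal.le_tsum (f := fun m => ∑' n, _) m)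

/-- For `x, y > 0` one has `1/(xy) ≤ 4·∑_{m,n} ⟨δ₀⟩_{I_m × I_n} 𝟙_{I_m × I_n}(x,y)`,
and the collection `{I_m × I_n}` is `1/4`-sparse. -/
theorem stmt1 :
    (∀ x y : ℝ, 0 < x → 0 < y →
      ENNReal.ofReal (1 / (x * y)) ≤
        4 * ∑' m : ℤ, ∑' n : ℤ,
          (Measure.dirac ((0 : ℝ), (0 : ℝ)) (Iint m ×ˢ Iint n) / volume (Iint m ×ˢ Iint n)) *
            (Iint m ×ˢ Iint n).indicator (fun _ => (1 : ℝ≥0∞)) (x, y)) ∧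
    IsSparseColl (1 / 4) {R | ∃ m n : ℤ, R = Iint m ×ˢ Iint n} :=
  ⟨fun _ _ hx hy => ofReal_one_div_mul_le_four_mul_tsum hx hy, isSparseColl_Iint_prod⟩
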